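/- arXiv:0804.0671 — 3 statements merged into one kernel-verified Lean document; each statement's English description precedes it below -/
import Mathlib

section
/- If R is reversible with respect to f_Y, i.e. ∫_A R(y,B) f_Y(y) μ_y(dy) = ∫_B R(y,A) f_Y(y) μ_y(dy) for all measurable A, B ⊆ Y, then p_R is reversible with respect to f_X: p_R(x|x') f_X(x') = p_R(x'|x) f_X(x) for all x, x' ∈ X. -/
open MeasureTheory ProbabilityTheory
open scoped ENNReal

/-! With `π := f_Y · μ_y`, the real reversibility hypothesis says `R.IsReversible π`, which makes
the joint law `π ⊗ R` invariant under swapping coordinates; hence `R` is symmetric for `π`: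
`∫ (R φ) ψ dπ = ∫ (R ψ) φ dπ`. With `φ_x := f(x, ·) / f_Y`, both `p_R(x|x') f_X(x')` and
`p_R(x'|x) f_X(x)` are `∫ (R φ_x) φ_{x'} dπ` in the two orders. The computation runs in `ℝ≥0∞`
to avoid integrability side conditions; invariance of `π` keeps `∫ R φ_x dπ = f_X(x)` finite, so
nothing is lost in passing back to `ℝ`. -/

namespace ProbabilityTheory.Kernel

variable {α : Type*} [MeasurableSpace α] {κ : Kernel α α} {π : Measure α}

theorem Invariant.lintegral_lintegral (h : Invariant κ π) {φ : α → ℝ≥0∞} (hφ : Measurable φ) :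
    ∫⁻ a, ∫⁻ b, φ b ∂κ a ∂π = ∫⁻ a, φ a ∂π := by
  rw [← Measure.lintegral_bind κ.aemeasurable hφ.aemeasurable, h.def]

theorem IsReversible.map_swap_compProd [IsFiniteMeasure π] [IsFiniteKernel κ]
    (h : IsReversible κ π) : (π ⊗ₘ κ).map Prod.swap = π ⊗ₘ κ := by
  refine Measure.ext_prod fun {A B} hA hB => ?_
  rw [Measure.map_apply measurable_swap (hA.prod hB), Set.preimage_swap_prod,
    Measure.compProd_apply_prod hB hA, Measure.compProd_apply_prod hA hB, h hB hA]

theorem IsReversible.lintegral_lintegral_mul_comm [IsFiniteMeasure π] [IsFiniteKernel κ]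
    (h : IsReversible κ π) {φ ψ : α → ℝ≥0∞} (hφ : Measurable φ) (hψ : Measurable ψ) :
    ∫⁻ a, (∫⁻ b, φ b ∂κ a) * ψ a ∂π = ∫⁻ a, (∫⁻ b, ψ b ∂κ a) * φ a ∂π := by
  have h_compProd : ∀ {φ ψ : α → ℝ≥0∞}, Measurable φ → Measurable ψ →
      ∫⁻ a, (∫⁻ b, φ b ∂κ a) * ψ a ∂π = ∫⁻ p, ψ p.1 * φ p.2 ∂(π ⊗ₘ κ) := by
    intro φ ψ hφ hψ
    rw [Measure.lintegral_compProd (by fun_prop)]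
    simp_rw [lintegral_const_mul _ hφ, mul_comm]
  rw [h_compProd hφ hψ, h_compProd hψ hφ]
  nth_rw 1 [← h.map_swap_compProd]
  rw [MeasureTheory.lintegral_map (by fun_prop) measurable_swap]
  simp_rw [Prod.fst_swap, Prod.snd_swap, mul_comm]

end ProbabilityTheory.Kernel

section WithDensity

variable {α β : Type*} [MeasurableSpace α] [MeasurableSpace β] {μ : Measure α} {g : α → ℝ}

theorem ofReal_setIntegral_toReal_mul_eq_setLIntegral_withDensity (κ : Kernel α β)
    [IsFiniteKernel κ] (hg : Integrable g μ) (hg_meas : Measurable g) (hg_nonneg : 0 ≤ g)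
    {A : Set α} {B : Set β} (hA : MeasurableSet A) (hB : MeasurableSet B) :
    ENNReal.ofReal (∫ a in A, (κ a B).toReal * g a ∂μ) =
      ∫⁻ a in A, κ a B ∂μ.withDensity fun a => ENNReal.ofReal (g a) := by
  have h_int : Integrable (fun a => (κ a B).toReal * g a) (μ.restrict A) :=
    hg.restrict.bdd_mul (c := κ.bound.toReal)
      (κ.measurable_coe hB).ennreal_toReal.aestronglyMeasurable
      (.of_forall fun a => by
        simpa using ENNReal.toReal_mono κ.bound_ne_top (κ.measure_le_bound a B))
  rw [ofReal_integral_eq_lintegral_ofReal h_int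
      (.of_forall fun a => mul_nonneg ENNReal.toReal_nonneg (hg_nonneg a)),
    setLIntegral_withDensity_eq_setLIntegral_mul _ hg_meas.ennreal_ofReal (κ.measurable_coe hB) hA]
  refine lintegral_congr fun a => ?_
  rw [ENNReal.ofReal_mul ENNReal.toReal_nonneg, ENNReal.ofReal_toReal (measure_ne_top _ _),
    Pi.mul_apply, mul_comm]

theorem isReversible_withDensity_ofReal (κ : Kernel α α) [IsFiniteKernel κ]
    (hg : Integrable g μ) (hg_meas : Measurable g) (hg_nonneg : 0 ≤ g)
    (h : ∀ A B : Set α, MeasurableSet A → MeasurableSet B →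
      ∫ a in A, (κ a B).toReal * g a ∂μ = ∫ a in B, (κ a A).toReal * g a ∂μ) :
    κ.IsReversible (μ.withDensity fun a => ENNReal.ofReal (g a)) := fun A B hA hB => by
  rw [← ofReal_setIntegral_toReal_mul_eq_setLIntegral_withDensity κ hg hg_meas hg_nonneg hA hB,
    ← ofReal_setIntegral_toReal_mul_eq_setLIntegral_withDensity κ hg hg_meas hg_nonneg hB hA,
    h A B hA hB]

theorem lintegral_withDensity_ofReal_div (hg_meas : Measurable g) (hg_pos : ∀ a, 0 < g a)
    {h : α → ℝ} (h_meas : Measurable h) :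
    ∫⁻ a, ENNReal.ofReal (h a / g a) ∂μ.withDensity (fun a => ENNReal.ofReal (g a)) =
      ∫⁻ a, ENNReal.ofReal (h a) ∂μ := by
  rw [lintegral_withDensity_eq_lintegral_mul _ hg_meas.ennreal_ofReal
    (g := fun a => ENNReal.ofReal (h a / g a)) (by fun_prop)]
  refine lintegral_congr fun a => ?_
  rw [Pi.mul_apply, ← ENNReal.ofReal_mul (hg_pos a).le, mul_div_cancel₀ _ (hg_pos a).ne']

theorem integral_integral_mul_eq_toReal_lintegral_withDensity (κ : Kernel α β)
    (hg_meas : Measurable g) (hg_nonneg : 0 ≤ g)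
    {u : β → ℝ} (hu_meas : Measurable u) (hu_nonneg : 0 ≤ u)
    {v : α → ℝ} (hv_meas : Measurable v) (hv_nonneg : 0 ≤ v)
    (h_fin : ∫⁻ a, ∫⁻ b, ENNReal.ofReal (u b) ∂κ a
      ∂μ.withDensity (fun a => ENNReal.ofReal (g a)) ≠ ∞) :
    ∫ a, (∫ b, u b ∂κ a) * (v a * g a) ∂μ =
      (∫⁻ a, (∫⁻ b, ENNReal.ofReal (u b) ∂κ a) * ENNReal.ofReal (v a)
        ∂μ.withDensity (fun a => ENNReal.ofReal (g a))).toReal := by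
  set U : α → ℝ≥0∞ := fun a => ∫⁻ b, ENNReal.ofReal (u b) ∂κ a
  have hU_meas : Measurable U := hu_meas.ennreal_ofReal.lintegral_kernel
  have h_inner : ∀ a, ∫ b, u b ∂κ a = (U a).toReal := fun a =>
    integral_eq_lintegral_of_nonneg_ae (.of_forall hu_nonneg) hu_meas.aestronglyMeasurable
  -- `U` may be infinite where `g` vanishes, but there both sides of the integrand vanish.
  have h_ae : ∀ᵐ a ∂μ, ENNReal.ofReal ((U a).toReal * (v a * g a)) =
      ENNReal.ofReal (g a) * (U a * ENNReal.ofReal (v a)) := by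
    have h_lt := ae_lt_top hU_meas h_fin
    rw [ae_withDensity_iff hg_meas.ennreal_ofReal] at h_lt
    filter_upwards [h_lt] with a ha
    rcases (hg_nonneg a).eq_or_lt with hga | hga
    · simp [← hga]
    · rw [ENNReal.ofReal_mul ENNReal.toReal_nonneg, ENNReal.ofReal_toReal
        (ha (ENNReal.ofReal_pos.mpr hga).ne').ne, ENNReal.ofReal_mul (hv_nonneg a)]
      ring
  simp_rw [h_inner]
  rw [integral_eq_lintegral_of_nonneg_ae
      (.of_forall fun a => mul_nonneg ENNReal.toReal_nonneg
        (mul_nonneg (hv_nonneg a) (hg_nonneg a))) (by fun_prop), lintegral_congr_ae h_ae,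
    lintegral_withDensity_eq_lintegral_mul _ hg_meas.ennreal_ofReal
      (g := fun a => U a * ENNReal.ofReal (v a)) (by fun_prop)]
  rfl

end WithDensity

theorem isProbabilityMeasure_withDensity_ofReal_integral_left {X Y : Type*}
    [MeasurableSpace X] [MeasurableSpace Y] {μx : Measure X} {μy : Measure Y}
    [SFinite μx] [SFinite μy] {f : X → Y → ℝ}
    (hf : Integrable (Function.uncurry f) (μx.prod μy)) (hf_nonneg : ∀ x y, 0 ≤ f x y)
    (hf_one : ∫ q, f q.1 q.2 ∂(μx.prod μy) = 1) :
    IsProbabilityMeasure (μy.withDensity fun y => ENNReal.ofReal (∫ x, f x y ∂μx)) := by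
  have h_marginal : ∫ y, ∫ x, f x y ∂μx ∂μy = 1 := (integral_prod_symm _ hf).symm.trans hf_one
  constructor
  rw [withDensity_apply _ .univ, Measure.restrict_univ,
    ← ofReal_integral_eq_lintegral_ofReal (f := fun y => ∫ x, f x y ∂μx)
      hf.integral_prod_right (.of_forall fun y => integral_nonneg fun x => hf_nonneg x y),
    h_marginal, ENNReal.ofReal_one]

theorem pR_reversible_of_R_reversible_general
    {X Y : Type*}
    [MeasurableSpace X]
    [MeasurableSpace Y]
    (μx : Measure X) (μy : Measure Y) [SigmaFinite μx] [SigmaFinite μy]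
    (f : X → Y → ℝ)
    (hf_meas : Measurable (Function.uncurry f))
    (hf_nonneg : ∀ x y, 0 ≤ f x y)
    (hf_prob : ∫ q, f q.1 q.2 ∂(μx.prod μy) = 1)
    (fX : X → ℝ) (hfX : ∀ x, fX x = ∫ y, f x y ∂μy)
    (fY : Y → ℝ) (hfY : ∀ y, fY y = ∫ x, f x y ∂μx)
    (hfX_pos : ∀ x, 0 < fX x) (hfY_pos : ∀ y, 0 < fY y)
    (fXY : X → Y → ℝ) (hfXY : ∀ x y, fXY x y = f x y / fY y)
    (fYX : Y → X → ℝ) (hfYX : ∀ y x, fYX y x = f x y / fX x)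
    (R : Kernel Y Y) [IsMarkovKernel R]
    (hR_rev : ∀ A B : Set Y, MeasurableSet A → MeasurableSet B →
      ∫ y in A, ((R y) B).toReal * fY y ∂μy = ∫ y in B, ((R y) A).toReal * fY y ∂μy)
    (pR : X → X → ℝ)
    (hpR : ∀ x x', pR x x' = ∫ y, (∫ y', fXY x y' ∂(R y)) * fYX y x' ∂μy) :
    ∀ x x', pR x x' * fX x' = pR x' x * fX x := by
  have hf_int : Integrable (Function.uncurry f) (μx.prod μy) :=
    .of_integral_ne_zero (hf_prob ▸ one_ne_zero)
  have hfY_eq : fY = fun y => ∫ x, f x y ∂μx := funext hfY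
  have hfY_meas : Measurable fY :=
    hfY_eq ▸ hf_meas.stronglyMeasurable.integral_prod_left'.measurable
  have hfXY_meas : ∀ x, Measurable (fXY x) := fun x =>
    funext (hfXY x) ▸ hf_meas.of_uncurry_left.div hfY_meas
  have hfXY_nonneg : ∀ x, 0 ≤ fXY x := fun x y =>
    hfXY x y ▸ div_nonneg (hf_nonneg x y) (hfY_pos y).le
  set π := μy.withDensity fun y => ENNReal.ofReal (fY y)
  have : IsProbabilityMeasure π := by
    simp only [π, hfY_eq]
    exact isProbabilityMeasure_withDensity_ofReal_integral_left hf_int hf_nonneg hf_prob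
  have h_rev : R.IsReversible π := isReversible_withDensity_ofReal R
    (hfY_eq ▸ hf_int.integral_prod_right) hfY_meas (fun y => (hfY_pos y).le) hR_rev
  have h_fin : ∀ x, ∫⁻ y, ∫⁻ y', ENNReal.ofReal (fXY x y') ∂(R y) ∂π ≠ ∞ := fun x => by
    rw [h_rev.invariant.lintegral_lintegral (hfXY_meas x).ennreal_ofReal]
    simp only [hfXY]
    rw [lintegral_withDensity_ofReal_div hfY_meas hfY_pos hf_meas.of_uncurry_left]
    exact (Integrable.of_integral_ne_zero (hfX x ▸ (hfX_pos x).ne')).lintegral_lt_top.ne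
  have h_pR : ∀ x x', pR x x' * fX x' = (∫⁻ y, (∫⁻ y', ENNReal.ofReal (fXY x y') ∂(R y)) *
      ENNReal.ofReal (fXY x' y) ∂π).toReal := fun x x' => by
    rw [← integral_integral_mul_eq_toReal_lintegral_withDensity R hfY_meas
      (fun y => (hfY_pos y).le) (hfXY_meas x) (hfXY_nonneg x) (hfXY_meas x') (hfXY_nonneg x')
      (h_fin x), hpR, ← integral_mul_const]
    refine integral_congr_ae (.of_forall fun y => ?_)
    dsimp only
    rw [hfYX, hfXY x' y, div_mul_cancel₀ _ (hfY_pos y).ne', mul_assoc,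
      div_mul_cancel₀ _ (hfX_pos x').ne']
  intro x x'
  rw [h_pR, h_pR, h_rev.lintegral_lintegral_mul_comm (hfXY_meas x).ennreal_ofReal
    (hfXY_meas x').ennreal_ofReal]

/-- If `R` is reversible with respect to `f_Y`, then `p_R` is reversible with respect
to `f_X`: `p_R(x|x') f_X(x') = p_R(x'|x) f_X(x)` for all `x, x'`. -/
theorem pR_reversible_of_R_reversible
    {X Y : Type*}
    [MetricSpace X] [TopologicalSpace.SeparableSpace X] [LocallyCompactSpace X]
    [MeasurableSpace X] [BorelSpace X]
    [MetricSpace Y] [TopologicalSpace.SeparableSpace Y] [LocallyCompactSpace Y]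
    [MeasurableSpace Y] [BorelSpace Y]
    (μx : Measure X) (μy : Measure Y) [SigmaFinite μx] [SigmaFinite μy]
    (f : X → Y → ℝ)
    (hf_meas : Measurable (Function.uncurry f))
    (hf_nonneg : ∀ x y, 0 ≤ f x y)
    (hf_prob : ∫ q, f q.1 q.2 ∂(μx.prod μy) = 1)
    (fX : X → ℝ) (hfX : ∀ x, fX x = ∫ y, f x y ∂μy)
    (fY : Y → ℝ) (hfY : ∀ y, fY y = ∫ x, f x y ∂μx)
    (hfX_pos : ∀ x, 0 < fX x) (hfY_pos : ∀ y, 0 < fY y)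
    (fXY : X → Y → ℝ) (hfXY : ∀ x y, fXY x y = f x y / fY y)
    (fYX : Y → X → ℝ) (hfYX : ∀ y x, fYX y x = f x y / fX x)
    (R : Kernel Y Y) [IsMarkovKernel R]
    (hR_inv : ∀ A : Set Y, MeasurableSet A →
      ∫ y, ((R y) A).toReal * fY y ∂μy = ∫ y in A, fY y ∂μy)
    (hR_rev : ∀ A B : Set Y, MeasurableSet A → MeasurableSet B →
      ∫ y in A, ((R y) B).toReal * fY y ∂μy = ∫ y in B, ((R y) A).toReal * fY y ∂μy)
    (pR : X → X → ℝ)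
    (hpR : ∀ x x', pR x x' = ∫ y, (∫ y', fXY x y' ∂(R y)) * fYX y x' ∂μy) :
    ∀ x x', pR x x' * fX x' = pR x' x * fX x :=
  pR_reversible_of_R_reversible_general μx μy f hf_meas hf_nonneg hf_prob fX hfX fY hfY hfX_pos
    hfY_pos fXY hfXY fYX hfYX R hR_rev pR hpR
end

section
/- For every measurable h : X → ℝ with ∫_X h(x)² f_X(x) μ_x(dx) < ∞ and ∫_X h(x) f_X(x) μ_x(dx) = 0, one has ∫_X ∫_X h(x) h(x') p_R(x|x') f_X(x') μ_x(dx') μ_x(dx) = ∫_Y ∫_Y h*(y) h*(y') R(y,dy') f_Y(y) μ_y(dy), where h*(y) = ∫_X h(x) f_{X|Y}(x|y) μ_x(dx). -/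
/-!
Write `w = f_{X|Y}`, `ρ = f_Y` and `G x y = ∫ w x y' ∂(R y)`. Since
`p_R(x|x') f_X(x') = ∫ G x y * w x' y * ρ y ∂μy`, the left-hand side is an iterated integral over
`x, x', y`. Once `y` is brought outermost, the `x'`-integral gives `h*(y) ρ(y)`, and the
`x`-integral gives `∫ h* ∂(R y)` after one more exchange with `R y`.

Every exchange is justified by a single absolute bound. With `s = |h|*` and `ν = ρ μy`,
`∫ (R s) s dν ≤ ∫ (R s)² dν + ∫ s² dν ≤ 2 ∫ s² dν ≤ 2 ∫ h² f_X dμx`. Both squares are controlled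
by Jensen for the probability measures `w(·, y) μx` and `R y`, together with the `R`-invariance
of `ν`.
-/

open MeasureTheory ProbabilityTheory ENNReal Function

section LIntegral

variable {α : Type*} [MeasurableSpace α] {μ : Measure α}

theorem sq_lintegral_le_lintegral_sq [IsProbabilityMeasure μ] {g : α → ℝ≥0∞}
    (hg : AEMeasurable g μ) :
    (∫⁻ a, g a ∂μ) ^ 2 ≤ ∫⁻ a, g a ^ 2 ∂μ := by
  have h12 := eLpNorm'_le_eLpNorm'_of_exponent_le one_pos one_le_two μ hg.aestronglyMeasurable
  simp only [eLpNorm', enorm_eq_self, rpow_one, div_one] at h12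
  calc (∫⁻ a, g a ∂μ) ^ 2 ≤ ((∫⁻ a, g a ^ (2 : ℝ) ∂μ) ^ (1 / 2 : ℝ)) ^ (2 : ℝ) := by
        rw [rpow_two]; gcongr
    _ = ∫⁻ a, g a ^ 2 ∂μ := by rw [← rpow_mul]; norm_num

theorem sq_lintegral_mul_le_lintegral_sq_mul {g v : α → ℝ≥0∞} (hg : Measurable g)
    (hv : Measurable v) (hv1 : ∫⁻ a, v a ∂μ = 1) :
    (∫⁻ a, g a * v a ∂μ) ^ 2 ≤ ∫⁻ a, g a ^ 2 * v a ∂μ := by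
  have : IsProbabilityMeasure (μ.withDensity v) :=
    ⟨by rw [withDensity_apply _ MeasurableSet.univ, Measure.restrict_univ, hv1]⟩
  have h := sq_lintegral_le_lintegral_sq (μ := μ.withDensity v) hg.aemeasurable
  simp only [lintegral_withDensity_eq_lintegral_mul _ hv hg,
    lintegral_withDensity_eq_lintegral_mul _ hv (hg.pow_const 2)] at h
  simpa only [Pi.mul_apply, mul_comm (v _)] using h

theorem ENNReal.mul_le_sq_add_sq (a b : ℝ≥0∞) : a * b ≤ a ^ 2 + b ^ 2 := by
  rcases le_total a b with hab | hba
  · calc a * b ≤ b ^ 2 := by rw [sq]; gcongr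
      _ ≤ a ^ 2 + b ^ 2 := le_add_self
  · calc a * b ≤ a ^ 2 := by rw [sq]; gcongr
      _ ≤ a ^ 2 + b ^ 2 := le_self_add

theorem lintegral_ofReal_div_integral_eq_one {g : α → ℝ} (hg0 : ∀ a, 0 ≤ g a)
    (hpos : 0 < ∫ a, g a ∂μ) :
    ∫⁻ a, ENNReal.ofReal (g a / ∫ a, g a ∂μ) ∂μ = 1 := by
  rw [← ofReal_integral_eq_lintegral_ofReal ((Integrable.of_integral_ne_zero hpos.ne').div_const _)
    (ae_of_all _ fun a => div_nonneg (hg0 a) hpos.le), integral_div, div_self hpos.ne',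
    ENNReal.ofReal_one]

end LIntegral

section Fubini

variable {α β γ : Type*} [MeasurableSpace α] [MeasurableSpace β] [MeasurableSpace γ]
  {μ : Measure α} {ν : Measure β} {ξ : Measure γ} [SFinite μ] [SFinite ν] [SFinite ξ]

theorem lintegral_lintegral_lintegral_mul {A : α → γ → ℝ≥0∞} {B : β → γ → ℝ≥0∞}
    (hA : Measurable (uncurry A)) (hB : Measurable (uncurry B)) :
    ∫⁻ x, ∫⁻ x', ∫⁻ y, A x y * B x' y ∂ξ ∂ν ∂μ
      = ∫⁻ y, (∫⁻ x, A x y ∂μ) * (∫⁻ x', B x' y ∂ν) ∂ξ := by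
  have hBint : Measurable fun y => ∫⁻ x', B x' y ∂ν := hB.lintegral_prod_left
  calc ∫⁻ x, ∫⁻ x', ∫⁻ y, A x y * B x' y ∂ξ ∂ν ∂μ
      = ∫⁻ x, ∫⁻ y, A x y * ∫⁻ x', B x' y ∂ν ∂ξ ∂μ := by
        refine lintegral_congr fun x => ?_
        rw [lintegral_lintegral_swap
          (((hA.comp measurable_prodMk_left).comp measurable_snd).mul hB).aemeasurable]
        exact lintegral_congr fun y => lintegral_const_mul _ (hB.comp measurable_prodMk_right)
    _ = ∫⁻ y, (∫⁻ x, A x y ∂μ) * (∫⁻ x', B x' y ∂ν) ∂ξ := by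
        rw [lintegral_lintegral_swap (hA.mul (hBint.comp measurable_snd)).aemeasurable]
        exact lintegral_congr fun y => lintegral_mul_const _ (hA.comp measurable_prodMk_right)

variable {E : Type*} [NormedAddCommGroup E] [NormedSpace ℝ E]

theorem integral_integral_swap_of_lintegral_lt_top {F : α → β → E}
    (hF : AEStronglyMeasurable (uncurry F) (μ.prod ν))
    (hfin : ∫⁻ x, ∫⁻ y, ‖F x y‖ₑ ∂ν ∂μ < ∞) :
    ∫ x, ∫ y, F x y ∂ν ∂μ = ∫ y, ∫ x, F x y ∂μ ∂ν := by
  refine integral_integral_swap ⟨hF, ?_⟩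
  rwa [HasFiniteIntegral, lintegral_prod _ hF.enorm]

theorem integral_integral_integral_rotate {Φ : α → β → γ → E}
    (hΦ : StronglyMeasurable fun p : α × β × γ => Φ p.1 p.2.1 p.2.2)
    (hfin : ∫⁻ x, ∫⁻ y, ∫⁻ z, ‖Φ x y z‖ₑ ∂ξ ∂ν ∂μ < ∞) :
    ∫ x, ∫ y, ∫ z, Φ x y z ∂ξ ∂ν ∂μ = ∫ z, ∫ x, ∫ y, Φ x y z ∂ν ∂μ ∂ξ := by
  have hslice (x : α) : StronglyMeasurable (uncurry fun y z => Φ x y z) :=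
    hΦ.comp_measurable measurable_prodMk_left
  have hinner_fin : ∀ᵐ x ∂μ, ∫⁻ y, ∫⁻ z, ‖Φ x y z‖ₑ ∂ξ ∂ν < ∞ := by
    have hassoc : Measurable fun q : (α × β) × γ => (q.1.1, q.1.2, q.2) := by fun_prop
    exact ae_lt_top (Measurable.lintegral_prod_right
      (hΦ.comp_measurable hassoc).enorm.lintegral_prod_right') hfin.ne
  have hinner_swap :
      (fun x => ∫ y, ∫ z, Φ x y z ∂ξ ∂ν) =ᵐ[μ] fun x => ∫ z, ∫ y, Φ x y z ∂ν ∂ξ := by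
    filter_upwards [hinner_fin] with x hx
    exact integral_integral_swap_of_lintegral_lt_top (hslice x).aestronglyMeasurable hx
  rw [integral_congr_ae hinner_swap]
  refine integral_integral_swap_of_lintegral_lt_top ?_ ?_
  · have hperm : Measurable fun q : (α × γ) × β => (q.1.1, q.2, q.1.2) := by fun_prop
    exact (hΦ.comp_measurable hperm).integral_prod_right'.aestronglyMeasurable
  · calc ∫⁻ x, ∫⁻ z, ‖∫ y, Φ x y z ∂ν‖ₑ ∂ξ ∂μ ≤ ∫⁻ x, ∫⁻ z, ∫⁻ y, ‖Φ x y z‖ₑ ∂ν ∂ξ ∂μ := by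
          gcongr; exact enorm_integral_le_lintegral_enorm _
      _ = ∫⁻ x, ∫⁻ y, ∫⁻ z, ‖Φ x y z‖ₑ ∂ξ ∂ν ∂μ := lintegral_congr fun x =>
          lintegral_lintegral_swap ((hslice x).enorm.comp measurable_swap).aemeasurable
      _ < ∞ := hfin

end Fubini

namespace ProbabilityTheory.Kernel

variable {α : Type*} [MeasurableSpace α] {κ : Kernel α α} {μ : Measure α}

theorem invariant_withDensity_ofReal [IsFiniteKernel κ] {ρ : α → ℝ} (hρ : Integrable ρ μ)
    (hρ0 : ∀ a, 0 ≤ ρ a)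
    (hinv : ∀ A, MeasurableSet A → ∫ a, (κ a A).toReal * ρ a ∂μ = ∫ a in A, ρ a ∂μ) :
    κ.Invariant (μ.withDensity fun a => ENNReal.ofReal (ρ a)) := by
  ext A hA
  have hκA : Integrable (fun a => (κ a A).toReal * ρ a) μ := by
    refine hρ.bdd_mul (c := κ.bound.toReal)
      (κ.measurable_coe hA).ennreal_toReal.aestronglyMeasurable (ae_of_all _ fun a => ?_)
    rw [Real.norm_of_nonneg toReal_nonneg]
    exact toReal_mono κ.bound_ne_top (κ.measure_le_bound a A)
  rw [Measure.bind_apply hA κ.aemeasurable, withDensity_apply _ hA,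
    lintegral_withDensity_eq_lintegral_mul₀ hρ.1.aemeasurable.ennreal_ofReal
      (κ.measurable_coe hA).aemeasurable,
    ← ofReal_integral_eq_lintegral_ofReal hρ.restrict (ae_of_all _ hρ0), ← hinv A hA,
    ofReal_integral_eq_lintegral_ofReal hκA
      (ae_of_all _ fun a => mul_nonneg toReal_nonneg (hρ0 a))]
  refine lintegral_congr fun a => ?_
  rw [ENNReal.ofReal_mul toReal_nonneg, ofReal_toReal (measure_ne_top _ _), mul_comm]
  rfl

variable [IsMarkovKernel κ] {g : α → ℝ≥0∞}

theorem Invariant.lintegral_sq_le (hκ : κ.Invariant μ) (hg : Measurable g) :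
    ∫⁻ a, (∫⁻ b, g b ∂κ a) ^ 2 ∂μ ≤ ∫⁻ a, g a ^ 2 ∂μ :=
  calc ∫⁻ a, (∫⁻ b, g b ∂κ a) ^ 2 ∂μ ≤ ∫⁻ a, ∫⁻ b, g b ^ 2 ∂κ a ∂μ := by
        gcongr; exact sq_lintegral_le_lintegral_sq hg.aemeasurable
    _ = ∫⁻ a, g a ^ 2 ∂μ := by
        rw [← Measure.lintegral_bind κ.aemeasurable (hg.pow_const 2).aemeasurable, hκ.def]

theorem Invariant.lintegral_mul_lt_top (hκ : κ.Invariant μ) (hg : Measurable g)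
    (hg2 : ∫⁻ a, g a ^ 2 ∂μ < ∞) : ∫⁻ a, (∫⁻ b, g b ∂κ a) * g a ∂μ < ∞ :=
  calc ∫⁻ a, (∫⁻ b, g b ∂κ a) * g a ∂μ ≤ ∫⁻ a, (∫⁻ b, g b ∂κ a) ^ 2 + g a ^ 2 ∂μ := by
        gcongr; exact ENNReal.mul_le_sq_add_sq _ _
    _ < ∞ := by
        rw [lintegral_add_right _ (hg.pow_const 2)]
        exact add_lt_top.2 ⟨(hκ.lintegral_sq_le hg).trans_lt hg2, hg2⟩

theorem Invariant.ae_lintegral_lt_top (hκ : κ.Invariant μ) (hg : Measurable g)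
    (hg2 : ∫⁻ a, g a ^ 2 ∂μ < ∞) : ∀ᵐ a ∂μ, ∫⁻ b, g b ∂κ a < ∞ := by
  filter_upwards [ae_lt_top (hg.lintegral_kernel.pow_const 2)
    ((hκ.lintegral_sq_le hg).trans_lt hg2).ne] with a ha
  simpa using ha

end ProbabilityTheory.Kernel

section KernelMeasurability

variable {α β γ : Type*} [MeasurableSpace α] [MeasurableSpace β] [MeasurableSpace γ]
  {κ : Kernel β γ} [IsSFiniteKernel κ]

theorem Measurable.lintegral_kernel_prod_snd {F : α → γ → ℝ≥0∞} (hF : Measurable (uncurry F)) :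
    Measurable fun p : α × β => ∫⁻ c, F p.1 c ∂(κ p.2) :=
  Measurable.lintegral_kernel_prod_right' (κ := Kernel.prodMkLeft α κ)
    (f := fun q : (α × β) × γ => F q.1.1 q.2) (hF.comp (measurable_fst.fst.prodMk measurable_snd))

theorem Measurable.stronglyMeasurable_integral_kernel_prod_snd {F : α → γ → ℝ}
    (hF : Measurable (uncurry F)) :
    StronglyMeasurable fun p : α × β => ∫ c, F p.1 c ∂(κ p.2) :=
  StronglyMeasurable.integral_kernel_prod_right' (κ := Kernel.prodMkLeft α κ)
    (f := fun q : (α × β) × γ => F q.1.1 q.2)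
    (hF.comp (measurable_fst.fst.prodMk measurable_snd)).stronglyMeasurable

end KernelMeasurability

section ConditionalDensity

variable {X Y : Type*} [MeasurableSpace X] [MeasurableSpace Y] {μx : Measure X} {μy : Measure Y}
  [SFinite μx] [SFinite μy] {R : Kernel Y Y} {w : X → Y → ℝ} {ρ : Y → ℝ} {h : X → ℝ}

theorem lintegral_lintegral_lintegral_enorm_le [IsSFiniteKernel R]
    (hw : Measurable (uncurry w)) (hw0 : ∀ x y, 0 ≤ w x y) (hρ : Measurable ρ)
    (hρ0 : ∀ y, 0 ≤ ρ y) (hh : Measurable h) :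
    ∫⁻ x, ∫⁻ x', ∫⁻ y, ‖h x * h x' * ((∫ y', w x y' ∂(R y)) * (w x' y * ρ y))‖ₑ ∂μy ∂μx ∂μx
      ≤ ∫⁻ y, (∫⁻ y', ∫⁻ x, ‖h x‖ₑ * ENNReal.ofReal (w x y') ∂μx ∂(R y))
          * ∫⁻ x, ‖h x‖ₑ * ENNReal.ofReal (w x y) ∂μx
          ∂(μy.withDensity fun y => ENNReal.ofReal (ρ y)) := by
  set W : X → Y → ℝ≥0∞ := fun x y => ENNReal.ofReal (w x y)
  have hW : Measurable (uncurry W) := hw.ennreal_ofReal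
  set Ge : X → Y → ℝ≥0∞ := fun x y => ∫⁻ y', W x y' ∂(R y)
  have hpt (x x' : X) (y : Y) : ‖h x * h x' * ((∫ y', w x y' ∂(R y)) * (w x' y * ρ y))‖ₑ
      ≤ ‖h x‖ₑ * Ge x y * ENNReal.ofReal (ρ y) * (‖h x'‖ₑ * W x' y) := by
    simp only [enorm_mul, Real.enorm_of_nonneg (hw0 _ _), Real.enorm_of_nonneg (hρ0 _), W, Ge]
    calc _ ≤ ‖h x‖ₑ * ‖h x'‖ₑ * ((∫⁻ y', ‖w x y'‖ₑ ∂(R y))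
          * (ENNReal.ofReal (w x' y) * ENNReal.ofReal (ρ y))) := by
          gcongr; exact enorm_integral_le_lintegral_enorm _
      _ = _ := by simp only [Real.enorm_of_nonneg (hw0 _ _)]; ring
  have hswap (y : Y) :
      ∫⁻ x, ‖h x‖ₑ * Ge x y ∂μx = ∫⁻ y', ∫⁻ x, ‖h x‖ₑ * W x y' ∂μx ∂(R y) := by
    have hconst (x : X) : ‖h x‖ₑ * Ge x y = ∫⁻ y', ‖h x‖ₑ * W x y' ∂(R y) :=
      (lintegral_const_mul _ (hW.comp measurable_prodMk_left)).symm
    simp only [hconst]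
    exact lintegral_lintegral_swap (f := fun x y' => ‖h x‖ₑ * W x y')
      ((hh.enorm.comp measurable_fst).mul hW).aemeasurable
  calc _ ≤ ∫⁻ x, ∫⁻ x', ∫⁻ y, ‖h x‖ₑ * Ge x y * ENNReal.ofReal (ρ y) * (‖h x'‖ₑ * W x' y)
        ∂μy ∂μx ∂μx := by
        gcongr; exact hpt _ _ _
    _ = _ := by
        rw [lintegral_lintegral_lintegral_mul
          ((hh.enorm.comp measurable_fst).mul hW.lintegral_kernel_prod_snd
            |>.mul (hρ.ennreal_ofReal.comp measurable_snd))
          ((hh.enorm.comp measurable_fst).mul hW),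
          lintegral_withDensity_eq_lintegral_mul_non_measurable _ hρ.ennreal_ofReal
            (ae_of_all _ fun _ => ofReal_lt_top)]
        refine lintegral_congr fun y => ?_
        rw [lintegral_mul_const' _ _ ofReal_ne_top, hswap]
        simp only [Pi.mul_apply]
        ring

theorem integral_mul_integral_kernel_eq [IsSFiniteKernel R] (hw : Measurable (uncurry w))
    (hw0 : ∀ x y, 0 ≤ w x y) (hh : Measurable h) {y : Y}
    (hy : ∫⁻ y', ∫⁻ x, ‖h x‖ₑ * ENNReal.ofReal (w x y') ∂μx ∂(R y) < ∞) :
    ∫ x, h x * ∫ y', w x y' ∂(R y) ∂μx = ∫ y', ∫ x, h x * w x y' ∂μx ∂(R y) := by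
  simp only [← integral_const_mul]
  refine integral_integral_swap_of_lintegral_lt_top
    ((hh.comp measurable_fst).mul hw).aestronglyMeasurable ?_
  simp only [enorm_mul, Real.enorm_of_nonneg (hw0 _ _)]
  rwa [lintegral_lintegral_swap ((hh.enorm.comp measurable_fst).mul hw.ennreal_ofReal).aemeasurable]

theorem integral_integral_integral_eq_integral_mul_integral_kernel [IsMarkovKernel R]
    (hw : Measurable (uncurry w)) (hw0 : ∀ x y, 0 ≤ w x y)
    (hw1 : ∀ y, ∫⁻ x, ENNReal.ofReal (w x y) ∂μx = 1)
    (hρ : Measurable ρ) (hρ_pos : ∀ y, 0 < ρ y)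
    (hR : R.Invariant (μy.withDensity fun y => ENNReal.ofReal (ρ y))) (hh : Measurable h)
    (hL2 : ∫⁻ y, (∫⁻ x, ‖h x‖ₑ ^ 2 * ENNReal.ofReal (w x y) ∂μx) * ENNReal.ofReal (ρ y) ∂μy < ∞) :
    ∫ x, ∫ x', ∫ y, h x * h x' * ((∫ y', w x y' ∂(R y)) * (w x' y * ρ y)) ∂μy ∂μx ∂μx
      = ∫ y, (∫ x, h x * w x y ∂μx) * (∫ y', ∫ x, h x * w x y' ∂μx ∂(R y)) * ρ y ∂μy := by
  set s : Y → ℝ≥0∞ := fun y => ∫⁻ x, ‖h x‖ₑ * ENNReal.ofReal (w x y) ∂μx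
  have hs : Measurable s :=
    ((hh.enorm.comp measurable_fst).mul hw.ennreal_ofReal).lintegral_prod_left
  have hs2 : ∫⁻ y, s y ^ 2 ∂(μy.withDensity fun y => ENNReal.ofReal (ρ y)) < ∞ := by
    rw [lintegral_withDensity_eq_lintegral_mul _ hρ.ennreal_ofReal (hs.pow_const 2)]
    refine lt_of_le_of_lt (lintegral_mono fun y => ?_) hL2
    rw [Pi.mul_apply, mul_comm]
    gcongr
    exact sq_lintegral_mul_le_lintegral_sq_mul hh.enorm
      (hw.ennreal_ofReal.comp measurable_prodMk_right) (hw1 y)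
  have hΦ : StronglyMeasurable fun p : X × X × Y =>
      h p.1 * h p.2.1 * ((∫ y', w p.1 y' ∂(R p.2.2)) * (w p.2.1 p.2.2 * ρ p.2.2)) := by
    have hG := (hw.stronglyMeasurable_integral_kernel_prod_snd (κ := R)).measurable
    refine Measurable.stronglyMeasurable ?_
    exact ((hh.comp measurable_fst).mul (hh.comp measurable_snd.fst)).mul
      ((hG.comp (measurable_fst.prodMk measurable_snd.snd)).mul
        ((hw.comp measurable_snd).mul (hρ.comp measurable_snd.snd)))
  rw [integral_integral_integral_rotate hΦ ((lintegral_lintegral_lintegral_enorm_le hw hw0 hρ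
    (fun y => (hρ_pos y).le) hh).trans_lt (hR.lintegral_mul_lt_top hs hs2))]
  refine integral_congr_ae ?_
  filter_upwards [(ae_withDensity_iff hρ.ennreal_ofReal).1 (hR.ae_lintegral_lt_top hs hs2)]
    with y hy
  have hinner (x : X) : ∫ x', h x * h x' * ((∫ y', w x y' ∂(R y)) * (w x' y * ρ y)) ∂μx
      = h x * (∫ y', w x y' ∂(R y)) * ρ y * ∫ x', h x' * w x' y ∂μx := by
    rw [← integral_const_mul]
    congr 1 with x'
    ring
  simp only [hinner, integral_mul_const,
    integral_mul_integral_kernel_eq hw hw0 hh (hy (ofReal_pos.2 (hρ_pos y)).ne')]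
  ring

end ConditionalDensity

section MarginalDensity

variable {X Y : Type*} [MeasurableSpace X] [MeasurableSpace Y] {μx : Measure X} {μy : Measure Y}
  [SFinite μx] [SFinite μy] {f : X → Y → ℝ} {fX : X → ℝ} {fY : Y → ℝ} {fXY : X → Y → ℝ}

theorem lintegral_lintegral_condDensity_mul_eq
    (hf_meas : Measurable (uncurry f)) (hf_nonneg : ∀ x y, 0 ≤ f x y)
    (hfX : ∀ x, fX x = ∫ y, f x y ∂μy) (hfX_pos : ∀ x, 0 < fX x) (hfY_pos : ∀ y, 0 < fY y)
    (hfXY : ∀ x y, fXY x y = f x y / fY y) {g : X → ℝ≥0∞} (hg : Measurable g) :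
    ∫⁻ y, (∫⁻ x, g x * ENNReal.ofReal (fXY x y) ∂μx) * ENNReal.ofReal (fY y) ∂μy
      = ∫⁻ x, g x * ENNReal.ofReal (fX x) ∂μx := by
  have hmul (x : X) (y : Y) :
      ENNReal.ofReal (fXY x y) * ENNReal.ofReal (fY y) = ENNReal.ofReal (f x y) := by
    rw [← ENNReal.ofReal_mul (by rw [hfXY]; exact div_nonneg (hf_nonneg x y) (hfY_pos y).le),
      hfXY, div_mul_cancel₀ _ (hfY_pos y).ne']
  have hmarg (x : X) : ∫⁻ y, ENNReal.ofReal (f x y) ∂μy = ENNReal.ofReal (fX x) := by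
    rw [hfX, ofReal_integral_eq_lintegral_ofReal
      (Integrable.of_integral_ne_zero ((hfX x) ▸ (hfX_pos x).ne')) (ae_of_all _ (hf_nonneg x))]
  calc ∫⁻ y, (∫⁻ x, g x * ENNReal.ofReal (fXY x y) ∂μx) * ENNReal.ofReal (fY y) ∂μy
      = ∫⁻ y, ∫⁻ x, g x * ENNReal.ofReal (f x y) ∂μx ∂μy := by
        simp only [← lintegral_mul_const' _ _ ofReal_ne_top, mul_assoc, hmul]
    _ = ∫⁻ x, ∫⁻ y, g x * ENNReal.ofReal (f x y) ∂μy ∂μx :=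
        (lintegral_lintegral_swap
          ((hg.comp measurable_fst).mul hf_meas.ennreal_ofReal).aemeasurable).symm
    _ = ∫⁻ x, g x * ENNReal.ofReal (fX x) ∂μx := lintegral_congr fun x => by
        rw [lintegral_const_mul _ hf_meas.of_uncurry_left.ennreal_ofReal, hmarg]

theorem lintegral_lintegral_condDensity_sq_lt_top
    (hf_meas : Measurable (uncurry f)) (hf_nonneg : ∀ x y, 0 ≤ f x y)
    (hfX : ∀ x, fX x = ∫ y, f x y ∂μy) (hfX_pos : ∀ x, 0 < fX x) (hfY_pos : ∀ y, 0 < fY y)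
    (hfXY : ∀ x y, fXY x y = f x y / fY y) {h : X → ℝ} (hh : Measurable h)
    (hL2 : Integrable (fun x => h x ^ 2 * fX x) μx) :
    ∫⁻ y, (∫⁻ x, ‖h x‖ₑ ^ 2 * ENNReal.ofReal (fXY x y) ∂μx) * ENNReal.ofReal (fY y) ∂μy < ∞ := by
  rw [lintegral_lintegral_condDensity_mul_eq hf_meas hf_nonneg hfX hfX_pos hfY_pos hfXY
    (hh.enorm.pow_const 2)]
  convert hL2.lintegral_lt_top using 3 with x
  rw [ENNReal.ofReal_mul (sq_nonneg _), ← sq_abs, ENNReal.ofReal_pow (abs_nonneg _),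
    Real.enorm_eq_ofReal_abs]

end MarginalDensity

theorem pR_operator_inner_product_general
    {X Y : Type*}
    [MeasurableSpace X]
    [MeasurableSpace Y]
    (μx : Measure X) (μy : Measure Y) [SigmaFinite μx] [SigmaFinite μy]
    (f : X → Y → ℝ)
    (hf_meas : Measurable (Function.uncurry f))
    (hf_nonneg : ∀ x y, 0 ≤ f x y)
    (hf_prob : ∫ q, f q.1 q.2 ∂(μx.prod μy) = 1)
    (fX : X → ℝ) (hfX : ∀ x, fX x = ∫ y, f x y ∂μy)
    (fY : Y → ℝ) (hfY : ∀ y, fY y = ∫ x, f x y ∂μx)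
    (hfX_pos : ∀ x, 0 < fX x) (hfY_pos : ∀ y, 0 < fY y)
    (fXY : X → Y → ℝ) (hfXY : ∀ x y, fXY x y = f x y / fY y)
    (fYX : Y → X → ℝ) (hfYX : ∀ y x, fYX y x = f x y / fX x)
    (R : Kernel Y Y) [IsMarkovKernel R]
    (hR_inv : ∀ A : Set Y, MeasurableSet A →
      ∫ y, ((R y) A).toReal * fY y ∂μy = ∫ y in A, fY y ∂μy)
    (pR : X → X → ℝ)
    (hpR : ∀ x x', pR x x' = ∫ y, (∫ y', fXY x y' ∂(R y)) * fYX y x' ∂μy) :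
    ∀ h : X → ℝ, Measurable h →
      Integrable (fun x => h x ^ 2 * fX x) μx →
      (∫ x, h x * fX x ∂μx) = 0 →
      ∫ x, (∫ x', h x * h x' * pR x x' * fX x' ∂μx) ∂μx
        = ∫ y, (∫ x, h x * fXY x y ∂μx) *
            (∫ y', (∫ x, h x * fXY x y' ∂μx) ∂(R y)) * fY y ∂μy := by
  intro h hh hL2 _
  have hfY_meas : Measurable fY := by
    rw [funext hfY]; exact hf_meas.stronglyMeasurable.integral_prod_left.measurable
  have hfXY_meas : Measurable (uncurry fXY) := by
    rw [show uncurry fXY = fun q => f q.1 q.2 / fY q.2 from funext fun q => hfXY q.1 q.2]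
    exact hf_meas.div (hfY_meas.comp measurable_snd)
  have hfXY_nonneg (x : X) (y : Y) : 0 ≤ fXY x y :=
    hfXY x y ▸ div_nonneg (hf_nonneg x y) (hfY_pos y).le
  have hfXY_one (y : Y) : ∫⁻ x, ENNReal.ofReal (fXY x y) ∂μx = 1 := by
    simp only [hfXY, hfY]
    exact lintegral_ofReal_div_integral_eq_one (hf_nonneg · y) (hfY y ▸ hfY_pos y)
  have hfY_int : Integrable fY μy := by
    rw [funext hfY]
    exact (Integrable.of_integral_ne_zero (hf_prob ▸ one_ne_zero)).integral_prod_right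
  have hkernel (x x' : X) : h x * h x' * pR x x' * fX x'
      = ∫ y, h x * h x' * ((∫ y', fXY x y' ∂(R y)) * (fXY x' y * fY y)) ∂μy := by
    rw [hpR, mul_assoc, ← integral_mul_const, ← integral_const_mul]
    congr 1 with y
    rw [hfYX, hfXY, div_mul_cancel₀ _ (hfY_pos y).ne']
    field_simp [(hfX_pos x').ne']
  simp only [hkernel]
  exact integral_integral_integral_eq_integral_mul_integral_kernel hfXY_meas hfXY_nonneg hfXY_one
    hfY_meas hfY_pos (R.invariant_withDensity_ofReal hfY_int (hfY_pos · |>.le) hR_inv) hh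
    (lintegral_lintegral_condDensity_sq_lt_top hf_meas hf_nonneg hfX hfX_pos hfY_pos hfXY hh hL2)

/-- For every mean-zero square-integrable `h`,
`∫∫ h(x) h(x') p_R(x|x') f_X(x') μx(dx') μx(dx)
  = ∫∫ h*(y) h*(y') R(y,dy') f_Y(y) μy(dy)`,
where `h*(y) = ∫ h(x) f_{X|Y}(x|y) μx(dx)`. -/
theorem pR_operator_inner_product
    {X Y : Type*}
    [MetricSpace X] [TopologicalSpace.SeparableSpace X] [LocallyCompactSpace X]
    [MeasurableSpace X] [BorelSpace X]
    [MetricSpace Y] [TopologicalSpace.SeparableSpace Y] [LocallyCompactSpace Y]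
    [MeasurableSpace Y] [BorelSpace Y]
    (μx : Measure X) (μy : Measure Y) [SigmaFinite μx] [SigmaFinite μy]
    (f : X → Y → ℝ)
    (hf_meas : Measurable (Function.uncurry f))
    (hf_nonneg : ∀ x y, 0 ≤ f x y)
    (hf_prob : ∫ q, f q.1 q.2 ∂(μx.prod μy) = 1)
    (fX : X → ℝ) (hfX : ∀ x, fX x = ∫ y, f x y ∂μy)
    (fY : Y → ℝ) (hfY : ∀ y, fY y = ∫ x, f x y ∂μx)
    (hfX_pos : ∀ x, 0 < fX x) (hfY_pos : ∀ y, 0 < fY y)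
    (fXY : X → Y → ℝ) (hfXY : ∀ x y, fXY x y = f x y / fY y)
    (fYX : Y → X → ℝ) (hfYX : ∀ y x, fYX y x = f x y / fX x)
    (R : Kernel Y Y) [IsMarkovKernel R]
    (hR_inv : ∀ A : Set Y, MeasurableSet A →
      ∫ y, ((R y) A).toReal * fY y ∂μy = ∫ y in A, fY y ∂μy)
    (pR : X → X → ℝ)
    (hpR : ∀ x x', pR x x' = ∫ y, (∫ y', fXY x y' ∂(R y)) * fYX y x' ∂μy) :
    ∀ h : X → ℝ, Measurable h →
      Integrable (fun x => h x ^ 2 * fX x) μx →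
      (∫ x, h x * fX x ∂μx) = 0 →
      ∫ x, (∫ x', h x * h x' * pR x x' * fX x' ∂μx) ∂μx
        = ∫ y, (∫ x, h x * fXY x y ∂μx) *
            (∫ y', (∫ x, h x * fXY x y' ∂μx) ∂(R y)) * fY y ∂μy :=
  pR_operator_inner_product_general μx μy f hf_meas hf_nonneg hf_prob fX hfX fY hfY hfX_pos hfY_pos
    fXY hfXY fYX hfYX R hR_inv pR hpR
end

section
/- (Theorem 3, operator-norm part, via inequality (7).) Suppose q₁ and q₂ are Markov transition densities on X that are DA algorithms with respect to joint probability densities f* and f̃ on X × Y respectively, where both f* and f̃ have x-marginal f_X, and suppose that for every measurable h : X → ℝ with ∫_X h² f_X dμ_x < ∞ and ∫_X h f_X dμ_x = 0 one has ∫∫ h(x) h(x') q₁(x|x') f_X(x') μ_x(dx') μ_x(dx) ≤ ∫∫ h(x) h(x') q₂(x|x') f_X(x') μ_x(dx') μ_x(dx). Then for every such h, ∫_Y (∫_X h(x) f*(x,y)/f*_Y(y) μ_x(dx))² f*_Y(y) μ_y(dy) ≤ ∫_Y (∫_X h(x) f̃(x,y)/f̃_Y(y) μ_x(dx))² f̃_Y(y)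 μ_y(dy), where f*_Y(y) = ∫_X f*(x,y) μ_x(dx) and f̃_Y(y) = ∫_X f̃(x,y) μ_x(dx); i.e. Var[E(h(X*)|Y*)] ≤ Var[E(h(X̃)|Ỹ)] for (X*,Y*) ~ f* and (X̃,Ỹ) ~ f̃. Consequently, the suprema of these quantities over all h with ∫_X h² f_X dμ_x = 1 and ∫_X h f_X dμ_x = 0 satisfy the same inequality. -/
/-!
For a DA algorithm, `q(x|x') f_X(x') = ∫ f(x,y) f(x',y) / f_Y(y) dy`, so by Fubini the
quadratic form `∫∫ h(x) h(x') q(x|x') f_X(x')` equals `∫ E[h(X) | Y = y]² f_Y(y) dy`, the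
variance of the conditional expectation when `h` is centred. The covariance ordering of `q₁` and
`q₂` is therefore exactly the ordering of these variances. For the suprema, Cauchy–Schwarz in `x`
gives `E[h(X) | Y = y]² f_Y(y) ≤ ∫ h(x)² f(x,y) dx`, so the variances are at most
`∫ h² f_X = 1` and the second supremum is a genuine least upper bound.
-/

open MeasureTheory

section WeightedIntegrals

variable {α : Type*} [MeasurableSpace α] {μ : Measure α} {w : α → ℝ}

lemma integrable_mul_mul_of_integrable_sq_mul {g₁ g₂ : α → ℝ} (hw : 0 ≤ w)
    (h₁ : Integrable (fun a => g₁ a ^ 2 * w a) μ)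
    (h₂ : Integrable (fun a => g₂ a ^ 2 * w a) μ)
    (hm : AEStronglyMeasurable (fun a => g₁ a * g₂ a * w a) μ) :
    Integrable (fun a => g₁ a * g₂ a * w a) μ := by
  refine ((h₁.add h₂).div_const 2).mono' hm (ae_of_all _ fun a => ?_)
  have hamgm := two_mul_le_add_sq |g₁ a| |g₂ a|
  rw [sq_abs, sq_abs] at hamgm
  rw [Real.norm_eq_abs, abs_mul, abs_mul, abs_of_nonneg (hw a), Pi.add_apply]
  nlinarith [mul_le_mul_of_nonneg_right hamgm (hw a)]

lemma sq_integral_mul_le_integral_sq_mul_mul_integral {g : α → ℝ} (hw : 0 ≤ w)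
    (hw_int : Integrable w μ) (hgw : Integrable (fun a => g a * w a) μ)
    (hg2w : Integrable (fun a => g a ^ 2 * w a) μ) :
    (∫ a, g a * w a ∂μ) ^ 2 ≤ (∫ a, g a ^ 2 * w a ∂μ) * ∫ a, w a ∂μ := by
  have hquad : ∀ t : ℝ, 0 ≤ (∫ a, g a ^ 2 * w a ∂μ) * (t * t)
      + (2 * ∫ a, g a * w a ∂μ) * t + ∫ a, w a ∂μ := fun t => by
    calc 0 ≤ ∫ a, (t * g a + 1) ^ 2 * w a ∂μ :=
          integral_nonneg fun a => mul_nonneg (sq_nonneg _) (hw a)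
      _ = ∫ a, ((t * t) * (g a ^ 2 * w a) + (2 * t) * (g a * w a)) + w a ∂μ := by
          congr 1; ext a; ring
      _ = _ := by
          rw [integral_add, integral_add, integral_const_mul, integral_const_mul]
          · ring
          exacts [hg2w.const_mul _, hgw.const_mul _,
            (hg2w.const_mul _).add (hgw.const_mul _), hw_int]
  have hdiscr := discrim_le_zero hquad
  rw [discrim] at hdiscr
  nlinarith

lemma integrable_prod_mul_of_integral_eq_one {β : Type*} [MeasurableSpace β] {ν : Measure β}
    [SFinite μ] [SFinite ν] {ψ : β → ℝ} {k : α → β → ℝ} (hψ : Integrable ψ ν)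
    (hk : Measurable (Function.uncurry k)) (hk_nonneg : ∀ a b, 0 ≤ k a b)
    (hk_int : ∀ b, Integrable (fun a => k a b) μ) (hk_one : ∀ b, ∫ a, k a b ∂μ = 1) :
    Integrable (fun p : α × β => ψ p.2 * k p.1 p.2) (μ.prod ν) := by
  have hm : AEStronglyMeasurable (fun p : α × β => ψ p.2 * k p.1 p.2) (μ.prod ν) :=
    hψ.1.comp_snd.mul hk.aestronglyMeasurable
  refine (integrable_prod_iff' hm).2
    ⟨ae_of_all _ fun b => (hk_int b).const_mul (ψ b), hψ.norm.congr (ae_of_all _ fun b => ?_)⟩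
  calc ‖ψ b‖ = ∫ a, ‖ψ b‖ * k a b ∂μ := by rw [integral_const_mul, hk_one, mul_one]
    _ = ∫ a, ‖ψ b * k a b‖ ∂μ := integral_congr_ae (ae_of_all _ fun a => by
          dsimp only; rw [norm_mul, Real.norm_of_nonneg (hk_nonneg a b)])

end WeightedIntegrals

namespace DataAugmentation

variable {X Y : Type*} [MeasurableSpace X] {μx : Measure X}

/-- `E[h(X) | Y = y]` for `(X, Y)` with joint density `f` and `Y`-marginal `fY`. -/
noncomputable def condMean (μx : Measure X) (f : X → Y → ℝ) (fY : Y → ℝ) (h : X → ℝ)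
    (y : Y) : ℝ :=
  ∫ x, h x * (f x y / fY y) ∂μx

lemma condMean_eq_div (f : X → Y → ℝ) (fY : Y → ℝ) (h : X → ℝ) (y : Y) :
    condMean μx f fY h y = (∫ x, h x * f x y ∂μx) / fY y := by
  simp only [condMean, ← integral_div, mul_div_assoc]

lemma condMean_mul_eq {f : X → Y → ℝ} {fY : Y → ℝ} (h : X → ℝ) {y : Y}
    (hy : fY y ≠ 0) :
    condMean μx f fY h y * fY y = ∫ x, h x * f x y ∂μx := by
  rw [condMean_eq_div, div_mul_cancel₀ _ hy]

variable [MeasurableSpace Y] {μy : Measure Y}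

structure IsJointDensity (μx : Measure X) (μy : Measure Y) (f : X → Y → ℝ) (fX : X → ℝ)
    (fY : Y → ℝ) : Prop where
  measurable : Measurable fun p : X × Y => f p.1 p.2
  nonneg : ∀ x y, 0 ≤ f x y
  integrable : Integrable (fun p : X × Y => f p.1 p.2) (μx.prod μy)
  marginal_fst : ∀ x, ∫ y, f x y ∂μy = fX x
  marginal_snd : ∀ y, fY y = ∫ x, f x y ∂μx
  marginal_fst_pos : ∀ x, 0 < fX x
  marginal_snd_pos : ∀ y, 0 < fY y

namespace IsJointDensity

variable {f : X → Y → ℝ} {fX : X → ℝ} {fY : Y → ℝ} {h : X → ℝ}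

lemma integrable_left (hf : IsJointDensity μx μy f fX fY) (y : Y) :
    Integrable (fun x => f x y) μx :=
  Integrable.of_integral_ne_zero (hf.marginal_snd y ▸ (hf.marginal_snd_pos y).ne')

lemma integrable_right (hf : IsJointDensity μx μy f fX fY) (x : X) :
    Integrable (fun y => f x y) μy :=
  Integrable.of_integral_ne_zero ((hf.marginal_fst x).symm ▸ (hf.marginal_fst_pos x).ne')

lemma integrable_sq_mul [SFinite μy] (hf : IsJointDensity μx μy f fX fY) (hh : Measurable h)
    (hh2 : Integrable (fun x => h x ^ 2 * fX x) μx) :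
    Integrable (fun p : X × Y => h p.1 ^ 2 * f p.1 p.2) (μx.prod μy) := by
  have hm : Measurable fun p : X × Y => h p.1 ^ 2 * f p.1 p.2 :=
    ((hh.comp measurable_fst).pow_const 2).mul hf.measurable
  refine (integrable_prod_iff hm.aestronglyMeasurable).2
    ⟨ae_of_all _ fun x => (hf.integrable_right x).const_mul (h x ^ 2),
      hh2.congr (ae_of_all _ fun x => ?_)⟩
  simp only [norm_mul, norm_pow, Real.norm_eq_abs, sq_abs, abs_of_nonneg (hf.nonneg x _),
    integral_const_mul, hf.marginal_fst]

lemma integrable_mul [SFinite μy] (hf : IsJointDensity μx μy f fX fY) (hh : Measurable h)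
    (hh2 : Integrable (fun x => h x ^ 2 * fX x) μx) :
    Integrable (fun p : X × Y => h p.1 * f p.1 p.2) (μx.prod μy) := by
  have hm : Measurable fun p : X × Y => h p.1 * f p.1 p.2 :=
    (hh.comp measurable_fst).mul hf.measurable
  simpa using integrable_mul_mul_of_integrable_sq_mul (g₂ := fun _ : X × Y => (1 : ℝ))
    (fun p => hf.nonneg p.1 p.2) (hf.integrable_sq_mul hh hh2) (by simpa using hf.integrable)
    (by simpa using hm.aestronglyMeasurable)

lemma measurable_marginal_snd [SFinite μx] (hf : IsJointDensity μx μy f fX fY) :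
    Measurable fY := by
  rw [funext hf.marginal_snd]
  exact (hf.measurable.stronglyMeasurable.integral_prod_left (μ := μx)).measurable

lemma measurable_condMean [SFinite μx] (hf : IsJointDensity μx μy f fX fY) (hh : Measurable h) :
    Measurable (condMean μx f fY h) :=
  (StronglyMeasurable.integral_prod_left (f := fun x y => h x * (f x y / fY y))
    (hh.comp measurable_fst |>.mul (hf.measurable.div
      (hf.measurable_marginal_snd.comp measurable_snd))).stronglyMeasurable).measurable

variable [SFinite μx] [SFinite μy]

lemma sq_condMean_mul_le_ae (hf : IsJointDensity μx μy f fX fY) (hh : Measurable h)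
    (hh2 : Integrable (fun x => h x ^ 2 * fX x) μx) :
    ∀ᵐ y ∂μy, condMean μx f fY h y ^ 2 * fY y ≤ ∫ x, h x ^ 2 * f x y ∂μx := by
  filter_upwards [(hf.integrable_mul hh hh2).prod_left_ae,
    (hf.integrable_sq_mul hh hh2).prod_left_ae] with y h₁ h₂
  have hcs := sq_integral_mul_le_integral_sq_mul_mul_integral (hf.nonneg · y)
    (hf.integrable_left y) h₁ h₂
  rw [← hf.marginal_snd] at hcs
  have hpos := hf.marginal_snd_pos y
  rw [condMean_eq_div, div_pow, div_mul_eq_mul_div, div_le_iff₀ (pow_pos hpos 2)]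
  nlinarith

lemma integral_integral_sq_mul_eq (hf : IsJointDensity μx μy f fX fY) (hh : Measurable h)
    (hh2 : Integrable (fun x => h x ^ 2 * fX x) μx) :
    ∫ y, ∫ x, h x ^ 2 * f x y ∂μx ∂μy = ∫ x, h x ^ 2 * fX x ∂μx := by
  rw [← integral_integral_swap (hf.integrable_sq_mul hh hh2)]
  simp only [integral_const_mul, hf.marginal_fst]

lemma integrable_sq_condMean_mul (hf : IsJointDensity μx μy f fX fY) (hh : Measurable h)
    (hh2 : Integrable (fun x => h x ^ 2 * fX x) μx) :
    Integrable (fun y => condMean μx f fY h y ^ 2 * fY y) μy := by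
  have hm : Measurable fun y => condMean μx f fY h y ^ 2 * fY y :=
    ((hf.measurable_condMean hh).pow_const 2).mul hf.measurable_marginal_snd
  refine (hf.integrable_sq_mul hh hh2).integral_prod_right.mono' hm.aestronglyMeasurable ?_
  filter_upwards [hf.sq_condMean_mul_le_ae hh hh2] with y hy
  rwa [Real.norm_of_nonneg (mul_nonneg (sq_nonneg _) (hf.marginal_snd_pos y).le)]

lemma integral_sq_condMean_mul_le (hf : IsJointDensity μx μy f fX fY) (hh : Measurable h)
    (hh2 : Integrable (fun x => h x ^ 2 * fX x) μx) :
    ∫ y, condMean μx f fY h y ^ 2 * fY y ∂μy ≤ ∫ x, h x ^ 2 * fX x ∂μx :=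
  hf.integral_integral_sq_mul_eq hh hh2 ▸ integral_mono_ae (hf.integrable_sq_condMean_mul hh hh2)
    (hf.integrable_sq_mul hh hh2).integral_prod_right (hf.sq_condMean_mul_le_ae hh hh2)

lemma integrable_mul_mul_div_marginal_snd (hf : IsJointDensity μx μy f fX fY)
    (hh : Measurable h) (hh2 : Integrable (fun x => h x ^ 2 * fX x) μx) :
    Integrable (fun r : X × (X × Y) => h r.2.1 * f r.2.1 r.2.2 * (f r.1 r.2.2 / fY r.2.2))
      (μx.prod (μx.prod μy)) := by
  refine integrable_prod_mul_of_integral_eq_one (k := fun x p => f x p.2 / fY p.2)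
    (hf.integrable_mul hh hh2) ?_ (fun x p => div_nonneg (hf.nonneg x p.2)
      (hf.marginal_snd_pos p.2).le) (fun p => (hf.integrable_left p.2).div_const _) fun p => ?_
  · exact (hf.measurable.comp (measurable_fst.prodMk measurable_snd.snd)).div
      (hf.measurable_marginal_snd.comp measurable_snd.snd)
  · rw [integral_div, ← hf.marginal_snd, div_self (hf.marginal_snd_pos p.2).ne']

lemma integrable_mul_condMean_mul (hf : IsJointDensity μx μy f fX fY) (hh : Measurable h)
    (hh2 : Integrable (fun x => h x ^ 2 * fX x) μx) :
    Integrable (fun p : X × Y => h p.1 * condMean μx f fY h p.2 * f p.1 p.2) (μx.prod μy) := by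
  have hm : Measurable fun p : X × Y => condMean μx f fY h p.2 ^ 2 * f p.1 p.2 :=
    (((hf.measurable_condMean hh).pow_const 2).comp measurable_snd).mul hf.measurable
  refine integrable_mul_mul_of_integrable_sq_mul (fun p => hf.nonneg p.1 p.2)
    (hf.integrable_sq_mul hh hh2) ((integrable_prod_iff' hm.aestronglyMeasurable).2
      ⟨ae_of_all _ fun y => (hf.integrable_left y).const_mul (condMean μx f fY h y ^ 2),
        (hf.integrable_sq_condMean_mul hh hh2).congr (ae_of_all _ fun y => ?_)⟩) ?_
  · simp only [norm_mul, norm_pow, Real.norm_eq_abs, sq_abs, abs_of_nonneg (hf.nonneg _ y),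
      integral_const_mul, hf.marginal_snd]
  · exact (((hh.comp measurable_fst).mul ((hf.measurable_condMean hh).comp measurable_snd)).mul
      hf.measurable).aestronglyMeasurable

lemma quadForm_eq_integral_sq_condMean_mul (hf : IsJointDensity μx μy f fX fY)
    {q : X → X → ℝ} (hq : ∀ x x', q x x' = ∫ y, (f x y / fY y) * (f x' y / fX x') ∂μy)
    (hh : Measurable h) (hh2 : Integrable (fun x => h x ^ 2 * fX x) μx) :
    ∫ x, ∫ x', h x * h x' * q x x' * fX x' ∂μx ∂μx
      = ∫ y, condMean μx f fY h y ^ 2 * fY y ∂μy := by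
  have hkernel : ∀ x x', h x * h x' * q x x' * fX x'
      = h x * ∫ y, h x' * f x' y * (f x y / fY y) ∂μy := fun x x' => by
    have hx' := (hf.marginal_fst_pos x').ne'
    rw [hq, ← integral_const_mul, ← integral_mul_const, ← integral_const_mul]
    congr 1; ext y; field_simp
  have hinner : ∀ᵐ x ∂μx, ∫ x', ∫ y, h x' * f x' y * (f x y / fY y) ∂μy ∂μx
      = ∫ y, condMean μx f fY h y * f x y ∂μy := by
    filter_upwards [(hf.integrable_mul_mul_div_marginal_snd hh hh2).prod_right_ae] with x hx
    rw [integral_integral_swap hx]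
    congr 1; ext y
    rw [integral_mul_const, condMean_eq_div]
    ring
  calc ∫ x, ∫ x', h x * h x' * q x x' * fX x' ∂μx ∂μx
      = ∫ x, ∫ y, h x * condMean μx f fY h y * f x y ∂μy ∂μx := by
        refine integral_congr_ae ?_
        filter_upwards [hinner] with x hx
        simp only [hkernel x, integral_const_mul]
        rw [hx, ← integral_const_mul]
        simp only [mul_assoc]
    _ = ∫ y, ∫ x, h x * condMean μx f fY h y * f x y ∂μx ∂μy :=
        integral_integral_swap (hf.integrable_mul_condMean_mul hh hh2)
    _ = ∫ y, condMean μx f fY h y * ∫ x, h x * f x y ∂μx ∂μy := by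
        congr 1; ext y
        rw [← integral_const_mul]
        congr 1; ext x; ring
    _ = ∫ y, condMean μx f fY h y ^ 2 * fY y ∂μy := by
        congr 1; ext y
        rw [← condMean_mul_eq h (hf.marginal_snd_pos y).ne']
        ring

end IsJointDensity

end DataAugmentation

open DataAugmentation

theorem da_norm_comparison_general
    {X Y : Type*}
    [MeasurableSpace X]
    [MeasurableSpace Y]
    (μx : Measure X) (μy : Measure Y) [SigmaFinite μx] [SigmaFinite μy]
    (fX : X → ℝ) (hfX_pos : ∀ x, 0 < fX x)
    (fstar ftilde : X → Y → ℝ)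
    (hfstar_meas : Measurable (Function.uncurry fstar))
    (hftilde_meas : Measurable (Function.uncurry ftilde))
    (hfstar_nonneg : ∀ x y, 0 ≤ fstar x y)
    (hftilde_nonneg : ∀ x y, 0 ≤ ftilde x y)
    (hfstar_prob : ∫ q, fstar q.1 q.2 ∂(μx.prod μy) = 1)
    (hftilde_prob : ∫ q, ftilde q.1 q.2 ∂(μx.prod μy) = 1)
    (hfstar_marg : ∀ x, ∫ y, fstar x y ∂μy = fX x)
    (hftilde_marg : ∀ x, ∫ y, ftilde x y ∂μy = fX x)
    (fstarY : Y → ℝ) (hfstarY : ∀ y, fstarY y = ∫ x, fstar x y ∂μx)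
    (hfstarY_pos : ∀ y, 0 < fstarY y)
    (ftildeY : Y → ℝ) (hftildeY : ∀ y, ftildeY y = ∫ x, ftilde x y ∂μx)
    (hftildeY_pos : ∀ y, 0 < ftildeY y)
    (q₁ q₂ : X → X → ℝ)
    (hq₁ : ∀ x x', q₁ x x' = ∫ y, (fstar x y / fstarY y) * (fstar x' y / fX x') ∂μy)
    (hq₂ : ∀ x x', q₂ x x' = ∫ y, (ftilde x y / ftildeY y) * (ftilde x' y / fX x') ∂μy)
    (hcov : ∀ h : X → ℝ, Measurable h →
      Integrable (fun x => h x ^ 2 * fX x) μx →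
      (∫ x, h x * fX x ∂μx) = 0 →
      ∫ x, (∫ x', h x * h x' * q₁ x x' * fX x' ∂μx) ∂μx
        ≤ ∫ x, (∫ x', h x * h x' * q₂ x x' * fX x' ∂μx) ∂μx) :
    (∀ h : X → ℝ, Measurable h →
      Integrable (fun x => h x ^ 2 * fX x) μx →
      (∫ x, h x * fX x ∂μx) = 0 →
      ∫ y, (∫ x, h x * (fstar x y / fstarY y) ∂μx) ^ 2 * fstarY y ∂μy
        ≤ ∫ y, (∫ x, h x * (ftilde x y / ftildeY y) ∂μx) ^ 2 * ftildeY y ∂μy) ∧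
    sSup {v : ℝ | ∃ h : X → ℝ, Measurable h ∧
        (∫ x, h x ^ 2 * fX x ∂μx) = 1 ∧ (∫ x, h x * fX x ∂μx) = 0 ∧
        v = ∫ y, (∫ x, h x * (fstar x y / fstarY y) ∂μx) ^ 2 * fstarY y ∂μy}
      ≤ sSup {v : ℝ | ∃ h : X → ℝ, Measurable h ∧
        (∫ x, h x ^ 2 * fX x ∂μx) = 1 ∧ (∫ x, h x * fX x ∂μx) = 0 ∧
        v = ∫ y, (∫ x, h x * (ftilde x y / ftildeY y) ∂μx) ^ 2 * ftildeY y ∂μy} := by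
  have hstar : IsJointDensity μx μy fstar fX fstarY :=
    ⟨hfstar_meas, hfstar_nonneg, .of_integral_ne_zero (hfstar_prob ▸ one_ne_zero), hfstar_marg,
      hfstarY, hfX_pos, hfstarY_pos⟩
  have htilde : IsJointDensity μx μy ftilde fX ftildeY :=
    ⟨hftilde_meas, hftilde_nonneg, .of_integral_ne_zero (hftilde_prob ▸ one_ne_zero),
      hftilde_marg, hftildeY, hfX_pos, hftildeY_pos⟩
  have hvar : ∀ h : X → ℝ, Measurable h → Integrable (fun x => h x ^ 2 * fX x) μx →
      (∫ x, h x * fX x ∂μx) = 0 →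
      ∫ y, condMean μx fstar fstarY h y ^ 2 * fstarY y ∂μy
        ≤ ∫ y, condMean μx ftilde ftildeY h y ^ 2 * ftildeY y ∂μy := fun h hh hh2 h0 =>
    (hstar.quadForm_eq_integral_sq_condMean_mul hq₁ hh hh2).symm.trans_le
      ((hcov h hh hh2 h0).trans_eq (htilde.quadForm_eq_integral_sq_condMean_mul hq₂ hh hh2))
  have hbdd : BddAbove {v : ℝ | ∃ h : X → ℝ, Measurable h ∧
      (∫ x, h x ^ 2 * fX x ∂μx) = 1 ∧ (∫ x, h x * fX x ∂μx) = 0 ∧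
      v = ∫ y, condMean μx ftilde ftildeY h y ^ 2 * ftildeY y ∂μy} := by
    refine ⟨1, ?_⟩
    rintro _ ⟨h, hh, h1, -, rfl⟩
    exact h1 ▸ htilde.integral_sq_condMean_mul_le hh (.of_integral_ne_zero (h1 ▸ one_ne_zero))
  refine ⟨hvar, Real.sSup_le ?_ (Real.sSup_nonneg ?_)⟩
  · rintro _ ⟨h, hh, h1, h0, rfl⟩
    exact (hvar h hh (.of_integral_ne_zero (h1 ▸ one_ne_zero)) h0).trans
      (le_csSup hbdd ⟨h, hh, h1, h0, rfl⟩)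
  · rintro _ ⟨h, -, -, -, rfl⟩
    exact integral_nonneg fun y => mul_nonneg (sq_nonneg _) (hftildeY_pos y).le

/-- Theorem 3 (operator-norm part, via inequality (7)): if the DA algorithms `q₁, q₂`
(with respect to joint densities `f*`, `f̃` having `x`-marginal `f_X`) satisfy the
covariance ordering `q₁ ⪰₁ q₂`, then
`Var[E(h(X*)|Y*)] ≤ Var[E(h(X̃)|Ỹ)]` for every mean-zero square-integrable `h`, and the
corresponding suprema over `h` with `∫ h² f_X = 1`, `∫ h f_X = 0` (i.e. the squared maximal
correlations, hence the operator norms) satisfy the same inequality. -/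
theorem da_norm_comparison
    {X Y : Type*}
    [MetricSpace X] [TopologicalSpace.SeparableSpace X] [LocallyCompactSpace X]
    [MeasurableSpace X] [BorelSpace X]
    [MetricSpace Y] [TopologicalSpace.SeparableSpace Y] [LocallyCompactSpace Y]
    [MeasurableSpace Y] [BorelSpace Y]
    (μx : Measure X) (μy : Measure Y) [SigmaFinite μx] [SigmaFinite μy]
    (fX : X → ℝ) (hfX_meas : Measurable fX) (hfX_pos : ∀ x, 0 < fX x)
    (hfX_prob : ∫ x, fX x ∂μx = 1)
    (fstar ftilde : X → Y → ℝ)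
    (hfstar_meas : Measurable (Function.uncurry fstar))
    (hftilde_meas : Measurable (Function.uncurry ftilde))
    (hfstar_nonneg : ∀ x y, 0 ≤ fstar x y)
    (hftilde_nonneg : ∀ x y, 0 ≤ ftilde x y)
    (hfstar_prob : ∫ q, fstar q.1 q.2 ∂(μx.prod μy) = 1)
    (hftilde_prob : ∫ q, ftilde q.1 q.2 ∂(μx.prod μy) = 1)
    (hfstar_marg : ∀ x, ∫ y, fstar x y ∂μy = fX x)
    (hftilde_marg : ∀ x, ∫ y, ftilde x y ∂μy = fX x)
    (fstarY : Y → ℝ) (hfstarY : ∀ y, fstarY y = ∫ x, fstar x y ∂μx)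
    (hfstarY_pos : ∀ y, 0 < fstarY y)
    (ftildeY : Y → ℝ) (hftildeY : ∀ y, ftildeY y = ∫ x, ftilde x y ∂μx)
    (hftildeY_pos : ∀ y, 0 < ftildeY y)
    (q₁ q₂ : X → X → ℝ)
    (hq₁ : ∀ x x', q₁ x x' = ∫ y, (fstar x y / fstarY y) * (fstar x' y / fX x') ∂μy)
    (hq₂ : ∀ x x', q₂ x x' = ∫ y, (ftilde x y / ftildeY y) * (ftilde x' y / fX x') ∂μy)
    (hcov : ∀ h : X → ℝ, Measurable h →
      Integrable (fun x => h x ^ 2 * fX x) μx →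
      (∫ x, h x * fX x ∂μx) = 0 →
      ∫ x, (∫ x', h x * h x' * q₁ x x' * fX x' ∂μx) ∂μx
        ≤ ∫ x, (∫ x', h x * h x' * q₂ x x' * fX x' ∂μx) ∂μx) :
    (∀ h : X → ℝ, Measurable h →
      Integrable (fun x => h x ^ 2 * fX x) μx →
      (∫ x, h x * fX x ∂μx) = 0 →
      ∫ y, (∫ x, h x * (fstar x y / fstarY y) ∂μx) ^ 2 * fstarY y ∂μy
        ≤ ∫ y, (∫ x, h x * (ftilde x y / ftildeY y) ∂μx) ^ 2 * ftildeY y ∂μy) ∧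
    sSup {v : ℝ | ∃ h : X → ℝ, Measurable h ∧
        (∫ x, h x ^ 2 * fX x ∂μx) = 1 ∧ (∫ x, h x * fX x ∂μx) = 0 ∧
        v = ∫ y, (∫ x, h x * (fstar x y / fstarY y) ∂μx) ^ 2 * fstarY y ∂μy}
      ≤ sSup {v : ℝ | ∃ h : X → ℝ, Measurable h ∧
        (∫ x, h x ^ 2 * fX x ∂μx) = 1 ∧ (∫ x, h x * fX x ∂μx) = 0 ∧
        v = ∫ y, (∫ x, h x * (ftilde x y / ftildeY y) ∂μx) ^ 2 * ftildeY y ∂μy} :=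
  da_norm_comparison_general μx μy fX hfX_pos fstar ftilde hfstar_meas hftilde_meas hfstar_nonneg
    hftilde_nonneg hfstar_prob hftilde_prob hfstar_marg hftilde_marg fstarY hfstarY hfstarY_pos
    ftildeY hftildeY hftildeY_pos q₁ q₂ hq₁ hq₂ hcov
end
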